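/- Let J₀ and J₁ be nonempty finite types, J = J₀ ⊕ J₁, and let ρ : Matrix (Fin 2 × J) (Fin 2 × J) ℂ be positive semidefinite with trace 1, satisfying the sector support condition: ρ ((k,σ),(l,τ)) = 0 unless σ lies in the J_k-component of J and τ lies in the J_l-component of J. Define the partial transpose ρ̃ over the first factor by ρ̃ ((k,σ),(l,τ)) = ρ ((l,σ),(k,τ)). Then ρ̃ is positive semidefinite if and only if ρ ((0,σ),(1,τ)) = 0 for all σ, τ ∈ J. -/

import Mathlib

open scoped BigOperators ComplexOrder

/-
The partial transpose ρ̃ agrees with ρ on the diagonal blocks. If the off-diagonal blocks of ρ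
vanish, then ρ̃ = ρ is positive semidefinite. Conversely, by the support condition the diagonal
entry of ρ at (1, σ) vanishes for σ in the `J₀`-component; a positive semidefinite matrix with a
zero diagonal entry has a zero row, and in ρ̃ the row through (1, σ) carries the entries
ρ (0, σ) (1, τ).
-/

/-- `σ : J₀ ⊕ J₁` lies in the `J_k`-component, for `k : Fin 2`. -/
def inSector {J₀ J₁ : Type*} (k : Fin 2) (σ : J₀ ⊕ J₁) : Prop :=
  match σ with
  | .inl _ => k = 0
  | .inr _ => k = 1

namespace Matrix

variable {ι J R : Type*}

def partialTransposeFst (A : Matrix (ι × J) (ι × J) R) : Matrix (ι × J) (ι × J) R :=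
  of fun a b => A (b.1, a.2) (a.1, b.2)

@[simp]
theorem partialTransposeFst_apply (A : Matrix (ι × J) (ι × J) R) (k l : ι) (σ τ : J) :
    A.partialTransposeFst (k, σ) (l, τ) = A (l, σ) (k, τ) :=
  rfl

theorem partialTransposeFst_eq_self [Zero R] {A : Matrix (ι × J) (ι × J) R}
    (h : ∀ k l σ τ, k ≠ l → A (k, σ) (l, τ) = 0) : A.partialTransposeFst = A := by
  ext ⟨k, σ⟩ ⟨l, τ⟩
  rcases eq_or_ne k l with rfl | hkl
  · rfl
  · rw [partialTransposeFst_apply, h k l σ τ hkl, h l k σ τ hkl.symm]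

theorem PosSemidef.apply_eq_zero_of_diag_eq_zero {n 𝕜 : Type*} [Fintype n] [RCLike 𝕜]
    {A : Matrix n n 𝕜} (hA : A.PosSemidef) {i : n} (hi : A i i = 0) (j : n) : A i j = 0 := by
  classical
  have hcol : A *ᵥ Pi.single i 1 = 0 :=
    (hA.dotProduct_mulVec_zero_iff _).mp (by simpa using hi)
  have hji : A j i = 0 := by simpa using congrFun hcol j
  rw [← hA.isHermitian.apply, hji, star_zero]

theorem PosSemidef.apply_eq_zero_of_partialTransposeFst {𝕜 : Type*} [Fintype ι] [Fintype J]
    [RCLike 𝕜] {A : Matrix (ι × J) (ι × J) 𝕜} (hA : A.partialTransposeFst.PosSemidef)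
    {l : ι} {σ : J} (hdiag : A (l, σ) (l, σ) = 0) (k : ι) (τ : J) : A (k, σ) (l, τ) = 0 :=
  hA.apply_eq_zero_of_diag_eq_zero (i := (l, σ)) hdiag (k, τ)

end Matrix

theorem one_mode_partial_transpose_criterion
    {J₀ J₁ : Type*} [Fintype J₀] [Fintype J₁]
    (ρ : Matrix (Fin 2 × (J₀ ⊕ J₁)) (Fin 2 × (J₀ ⊕ J₁)) ℂ)
    (hpsd : ρ.PosSemidef)
    (hsupp : ∀ (k l : Fin 2) (σ τ : J₀ ⊕ J₁),
      ρ (k, σ) (l, τ) ≠ 0 → inSector k σ ∧ inSector l τ) :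
    (Matrix.of fun a b : Fin 2 × (J₀ ⊕ J₁) => ρ (b.1, a.2) (a.1, b.2)).PosSemidef
      ↔ (∀ σ τ : J₀ ⊕ J₁, ρ (0, σ) (1, τ) = 0) := by
  change ρ.partialTransposeFst.PosSemidef ↔ _
  have hout : ∀ k l σ τ, ¬ inSector k σ → ρ (k, σ) (l, τ) = 0 :=
    fun k l σ τ hk => by_contra fun hne => hk (hsupp k l σ τ hne).1
  constructor
  · rintro hpt (σ₀ | σ₁) τ
    · exact hpt.apply_eq_zero_of_partialTransposeFst (hout 1 1 _ _ (by simp [inSector])) 0 τ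
    · exact hout 0 1 _ τ (by simp [inSector])
  · intro hz
    have hz' : ∀ σ τ, ρ (1, σ) (0, τ) = 0 := fun σ τ => by
      rw [← hpsd.isHermitian.apply, hz, star_zero]
    have hoff : ∀ k l σ τ, k ≠ l → ρ (k, σ) (l, τ) = 0 := fun k l σ τ hkl => by
      fin_cases k <;> fin_cases l
      exacts [absurd rfl hkl, hz σ τ, hz' σ τ, absurd rfl hkl]
    rwa [Matrix.partialTransposeFst_eq_self hoff]
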